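/- Let n ≥ 4, let S ⊆ {4,…,n}, and let k be an integer with 1 ≤ k ≤ n−2. If p is a starting position attaining the maximum window sum of length k in A^S (i.e. W(A^S,p,k) ≥ W(A^S,q,k) for all q with 1 ≤ q ≤ n−k+1), then p ∈ {2, 3}. -/

import Mathlib

/-- Window sum: `W A p ℓ = a_p + a_{p+1} + ⋯ + a_{p+ℓ-1}` for a 1-indexed sequence `A`. -/
noncomputable def W (A : ℕ → ℝ) (p ℓ : ℕ) : ℝ := ∑ i ∈ Finset.Ico p (p + ℓ), A i

/-- The sequence `A^S`: `a_1 = 0`, `a_2 = 2`, `a_3 = 4n`, and for `4 ≤ i ≤ n`,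
`a_i = 1` if `i ∈ S` and `a_i = 3` otherwise. -/
noncomputable def AS (n : ℕ) (S : Finset ℕ) (i : ℕ) : ℝ :=
  if i = 1 then 0 else if i = 2 then 2 else if i = 3 then 4 * n
  else if i ∈ S then 1 else 3

lemma AS_pos (n : ℕ) (hn : 4 ≤ n) (S : Finset ℕ) (i : ℕ) (hi : 2 ≤ i) :
    0 < AS n S i := by
  unfold AS
  have hn' : (4:ℝ) ≤ (n:ℝ) := by exact_mod_cast hn
  split_ifs <;> norm_num <;> omega

lemma AS_le_three (n : ℕ) (S : Finset ℕ) (i : ℕ) (hi : 4 ≤ i) :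
    AS n S i ≤ 3 := by
  unfold AS
  split_ifs <;> first | omega | norm_num

/-- For `1 ≤ k ≤ n-2`, any starting position attaining the maximum window sum of
length `k` in `A^S` lies in `{2, 3}`. -/
theorem max_window_of_AS_starts_at_two_or_three
    (n : ℕ) (hn : 4 ≤ n) (S : Finset ℕ) (hS : S ⊆ Finset.Icc 4 n)
    (k : ℕ) (hk1 : 1 ≤ k) (hk2 : k ≤ n - 2)
    (p : ℕ) (hp1 : 1 ≤ p) (hp2 : p ≤ n - k + 1)
    (hmax : ∀ q, 1 ≤ q → q ≤ n - k + 1 → W (AS n S) p k ≥ W (AS n S) q k) :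
    p = 2 ∨ p = 3 := by
  have hn' : (4:ℝ) ≤ (n:ℝ) := by exact_mod_cast hn
  have hkn : k + 2 ≤ n := by omega
  -- Step 1: p ≤ 3
  have hple : p ≤ 3 := by
    by_contra h
    push_neg at h
    have h4p : 4 ≤ p := by omega
    have h3 := hmax 3 (by norm_num) (by omega)
    -- W p k ≤ 3 * k
    have hub : W (AS n S) p k ≤ 3 * k := by
      unfold W
      calc ∑ i ∈ Finset.Ico p (p + k), AS n S i
          ≤ ∑ i ∈ Finset.Ico p (p + k), (3:ℝ) := by
            apply Finset.sum_le_sum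
            intro i hi
            rw [Finset.mem_Ico] at hi
            exact AS_le_three n S i (by omega)
        _ = 3 * k := by
            rw [Finset.sum_const, Nat.card_Ico]
            simp [mul_comm]
    -- W 3 k ≥ 4n
    have hlb : (4:ℝ) * n ≤ W (AS n S) 3 k := by
      unfold W
      have h3mem : 3 ∈ Finset.Ico 3 (3 + k) := by
        rw [Finset.mem_Ico]; omega
      have := Finset.single_le_sum (f := AS n S)
        (fun i hi => by
          rw [Finset.mem_Ico] at hi
          exact (AS_pos n hn S i (by omega)).le) h3mem
      have hA3 : AS n S 3 = 4 * n := by norm_num [AS]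
      linarith [this, hA3 ▸ this]
    have hk' : (k:ℝ) ≤ (n:ℝ) - 2 := by
      have : ((k:ℕ):ℝ) ≤ ((n - 2 : ℕ):ℝ) := by exact_mod_cast hk2
      rwa [Nat.cast_sub (by omega)] at this
    nlinarith [h3, hub, hlb]
  -- Step 2: p ≠ 1
  have hpne : p ≠ 1 := by
    intro hp
    subst hp
    have h2 := hmax 2 (by norm_num) (by omega)
    have e1 : W (AS n S) 1 k = AS n S 1 + ∑ i ∈ Finset.Ico 2 (1 + k), AS n S i := by
      unfold W
      rw [Finset.sum_eq_sum_Ico_succ_bot (by omega)]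
    have e2 : W (AS n S) 2 k = (∑ i ∈ Finset.Ico 2 (1 + k), AS n S i) + AS n S (1 + k) := by
      unfold W
      have : 2 + k = (1 + k) + 1 := by omega
      rw [this, Finset.sum_Ico_succ_top (by omega)]
    have hA1 : AS n S 1 = 0 := by norm_num [AS]
    have hpos : 0 < AS n S (1 + k) := AS_pos n hn S (1 + k) (by omega)
    rw [e1, e2, hA1] at h2
    linarith
  omega
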